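/- Theorem 3 (non-Abelian symmetry bound): Suppose H = ⊕_{λ=1}^d K_λ ⊗ K'_λ, the dynamics is U = ⊕_λ 1_{n_λ} ⊗ U_λ with U_λ unitary on K'_λ, the state is ρ = ⊕_λ ∑_ν p_λ^ν ρ_λ^ν ⊗ ρ'^ν_λ, and the partition is X = ⊕_λ X_λ ⊗ X'_λ built from partitions X_λ on K_λ and X'_λ on K'_λ. Then H_AFL(ρ, U, X, t) ≤ ∑_{λ,ν} p_λ^ν [H_AFL(ρ_λ^ν, 1_{n_λ}, X_λ, t) + H_AFL(ρ'^ν_λ, U_λ, X'_λ, t)] + H({p_λ^ν}). -/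

import Mathlib

open scoped BigOperators ComplexOrder
open Matrix Kronecker

namespace AFL

variable {n : Type*} [Fintype n] [DecidableEq n]

/-- von Neumann entropy of a (Hermitian) matrix, via its eigenvalues. -/
noncomputable def vNEntropy (ρ : Matrix n n ℂ) : ℝ :=
  if h : ρ.IsHermitian then -∑ i, h.eigenvalues i * Real.log (h.eigenvalues i) else 0

/-- A density matrix: positive semidefinite (hence Hermitian) with unit trace. -/
def IsDensity (ρ : Matrix n n ℂ) : Prop := ρ.PosSemidef ∧ ρ.trace = 1

/-- An operational partition of unity (Kraus operators of a channel). -/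
def IsPartition {K : Type*} [Fintype K] (X : K → Matrix n n ℂ) : Prop :=
  ∑ i, (X i)ᴴ * X i = 1

/-- The entropy-exchange (environment) state ρ̃[X]_{ij} = Tr(Xⁱ ρ Xʲ†). -/
noncomputable def envState {K : Type*} [Fintype K] (X : K → Matrix n n ℂ)
    (ρ : Matrix n n ℂ) : Matrix K K ℂ :=
  Matrix.of fun i j => (X i * ρ * (X j)ᴴ).trace

/-- Multitime Kraus operator U X^{i_t} ⋯ U X^{i_1} of the t-step evolved partition (UX)^t. -/
noncomputable def multiKraus {K : Type*} (U : Matrix n n ℂ) (X : K → Matrix n n ℂ)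
    (t : ℕ) (idx : Fin t → K) : Matrix n n ℂ :=
  (List.ofFn fun k => U * X (idx k)).prod

/-- Cumulative AFL entropy: von Neumann entropy of the environment state after t steps. -/
noncomputable def HAFL {K : Type*} [Fintype K] [DecidableEq K]
    (ρ U : Matrix n n ℂ) (X : K → Matrix n n ℂ) (t : ℕ) : ℝ :=
  vNEntropy (envState (multiKraus U X t) ρ)

/-- Shannon entropy of a probability vector. -/
noncomputable def shannon {ι : Type*} [Fintype ι] (p : ι → ℝ) : ℝ :=
  -∑ i, p i * Real.log (p i)

end AFL

/-!
Write a density matrix in Gram form `ρ = C Cᴴ` with `Cᴴ C = diagonal λ`, `λ` its spectrum.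
Since `B Bᴴ` and `Bᴴ B` have the same nonzero eigenvalues, `S(B Bᴴ) = S(Bᴴ B)`; and the
entropy of a positive matrix is at most the Shannon entropy of its diagonal, because the
diagonal is a doubly stochastic average of the spectrum and `negMulLog` is concave.
Stacking the factors `√p_x C_x` side by side gives `S(∑ p_x ρ_x) ≤ ∑ p_x S(ρ_x) + H(p)`
(the chain rule for `H` identifies the Shannon entropy of the diagonal `p_x λ_x`), and
`C ⊗ D` gives `S(ρ ⊗ σ) = S(ρ) + S(σ)`. For the block dynamics, the multitime Kraus
operators split blockwise into Kronecker products, so the environment state of the whole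
system is, up to a reindexing, `∑_{λ,ν} p_λ^ν ρ̃_λ^ν ⊗ ρ̃'_λ^ν`, to which both facts apply.
-/

theorem Complex.ofReal_sqrt_mul_ofReal_sqrt {r : ℝ} (hr : 0 ≤ r) : (√r : ℂ) * (√r : ℂ) = r := by
  rw [← Complex.ofReal_mul, Real.mul_self_sqrt hr]

namespace Matrix

section Spectral

variable {n : Type*} [Fintype n] [DecidableEq n]

theorem sum_normSq_row_eq_one {U : Matrix n n ℂ} (hU : U ∈ unitaryGroup n ℂ) (i : n) :
    ∑ j, Complex.normSq (U i j) = 1 := by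
  have h := congrFun (congrFun (mem_unitaryGroup_iff.mp hU) i) i
  simp only [mul_apply, star_apply, RCLike.star_def, Complex.mul_conj, one_apply_eq] at h
  exact_mod_cast h

theorem sum_normSq_col_eq_one {U : Matrix n n ℂ} (hU : U ∈ unitaryGroup n ℂ) (j : n) :
    ∑ i, Complex.normSq (U i j) = 1 := by
  have h := congrFun (congrFun (mem_unitaryGroup_iff'.mp hU) j) j
  simp only [mul_apply, star_apply, RCLike.star_def, mul_comm (starRingEnd ℂ _),
    Complex.mul_conj, one_apply_eq] at h
  exact_mod_cast h

theorem IsHermitian.re_apply_self_eq_sum_eigenvalues {A : Matrix n n ℂ} (hA : A.IsHermitian)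
    (i : n) :
    (A i i).re = ∑ j, Complex.normSq (hA.eigenvectorUnitary i j) * hA.eigenvalues j := by
  conv_lhs => rw [hA.spectral_theorem]
  rw [Unitary.conjStarAlgAut_apply, mul_apply, Complex.re_sum]
  refine Finset.sum_congr rfl fun j _ => ?_
  simp only [mul_diagonal, star_apply, RCLike.star_def, Function.comp_apply,
    mul_right_comm _ _ (starRingEnd ℂ _), Complex.mul_conj]
  simp

theorem PosSemidef.exists_eq_mul_conjTranspose_diagonal {A : Matrix n n ℂ}
    (hA : A.PosSemidef) :
    ∃ (C : Matrix n n ℂ) (d : n → ℝ), A = C * Cᴴ ∧ Cᴴ * C = diagonal ((↑) ∘ d) ∧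
      (∀ k, 0 ≤ d k) ∧ A.trace = ∑ k, (d k : ℂ) := by
  set U : Matrix n n ℂ := (hA.isHermitian.eigenvectorUnitary : Matrix n n ℂ)
  set μ := hA.isHermitian.eigenvalues
  set R : Matrix n n ℂ := diagonal ((↑) ∘ fun k => √(μ k))
  have hUU : Uᴴ * U = 1 := mem_unitaryGroup_iff'.mp hA.isHermitian.eigenvectorUnitary.2
  have hRR : R * Rᴴ = diagonal ((↑) ∘ μ) := by
    rw [diagonal_conjTranspose, diagonal_mul_diagonal]
    congr 1
    ext k
    simp [← Complex.ofReal_mul, Real.mul_self_sqrt (hA.eigenvalues_nonneg k), μ]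
  have hRR' : Rᴴ * R = R * Rᴴ := by
    simp only [R, diagonal_conjTranspose, diagonal_mul_diagonal, mul_comm]
  refine ⟨U * R, μ, ?_, ?_, hA.eigenvalues_nonneg, hA.isHermitian.trace_eq_sum_eigenvalues⟩
  · rw [conjTranspose_mul, Matrix.mul_assoc, ← Matrix.mul_assoc R, hRR]
    conv_lhs => rw [hA.isHermitian.spectral_theorem]
    rw [Unitary.conjStarAlgAut_apply, Matrix.mul_assoc]
    rfl
  · rw [conjTranspose_mul, Matrix.mul_assoc, ← Matrix.mul_assoc Uᴴ, hUU, Matrix.one_mul, hRR',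
      hRR]

end Spectral

section WeightedStack

variable {n m ι : Type*}

noncomputable def weightedStack (p : ι → ℝ) (C : ι → Matrix n m ℂ) : Matrix n (ι × m) ℂ :=
  of fun i y => (√(p y.1) : ℂ) * C y.1 i y.2

theorem weightedStack_mul_conjTranspose [Fintype m] [Fintype ι] {p : ι → ℝ} (hp : ∀ x, 0 ≤ p x)
    (C : ι → Matrix n m ℂ) :
    weightedStack p C * (weightedStack p C)ᴴ = ∑ x, (p x : ℂ) • (C x * (C x)ᴴ) := by
  ext i j
  simp only [weightedStack, mul_apply, conjTranspose_apply, of_apply, star_mul',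
    Fintype.sum_prod_type, sum_apply, smul_apply, smul_eq_mul, Finset.mul_sum]
  refine Finset.sum_congr rfl fun x _ => Finset.sum_congr rfl fun k _ => ?_
  rw [RCLike.star_def, Complex.conj_ofReal, ← Complex.ofReal_sqrt_mul_ofReal_sqrt (hp x)]
  ring

theorem conjTranspose_mul_weightedStack_apply_self [Fintype n] {p : ι → ℝ} (hp : ∀ x, 0 ≤ p x)
    (C : ι → Matrix n m ℂ) (x : ι) (k : m) :
    ((weightedStack p C)ᴴ * weightedStack p C) (x, k) (x, k) = p x * ((C x)ᴴ * C x) k k := by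
  simp only [weightedStack, mul_apply, conjTranspose_apply, of_apply, star_mul', Finset.mul_sum]
  refine Finset.sum_congr rfl fun i _ => ?_
  rw [RCLike.star_def, Complex.conj_ofReal, ← Complex.ofReal_sqrt_mul_ofReal_sqrt (hp x)]
  ring

end WeightedStack

end Matrix

namespace AFL

open Polynomial Real

section Entropy

variable {n m : Type*} [Fintype n] [Fintype m]

theorem IsDensity.kronecker {ρ : Matrix n n ℂ} {σ : Matrix m m ℂ} (hρ : IsDensity ρ)
    (hσ : IsDensity σ) : IsDensity (ρ ⊗ₖ σ) :=
  ⟨hρ.1.kronecker hσ.1, by rw [trace_kronecker, hρ.2, hσ.2, one_mul]⟩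

theorem shannon_eq_sum_negMulLog {ι : Type*} [Fintype ι] (p : ι → ℝ) :
    shannon p = ∑ i, negMulLog (p i) := by
  simp [shannon, negMulLog]

theorem sum_negMulLog_mul_of_sum_eq_one {ι : Type*} [Fintype ι] (c : ℝ) {d : ι → ℝ}
    (hd : ∑ k, d k = 1) :
    ∑ k, negMulLog (c * d k) = negMulLog c + c * ∑ k, negMulLog (d k) := by
  simp only [negMulLog_mul, Finset.sum_add_distrib, ← Finset.sum_mul, ← Finset.mul_sum, hd,
    one_mul]

variable [DecidableEq n] [DecidableEq m]

theorem vNEntropy_eq_sum_negMulLog {A : Matrix n n ℂ} (hA : A.IsHermitian) :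
    vNEntropy A = ∑ i, negMulLog (hA.eigenvalues i) := by
  simp [vNEntropy, hA, negMulLog]

theorem vNEntropy_eq_sum_roots_charpoly {A : Matrix n n ℂ} (hA : A.IsHermitian) :
    vNEntropy A = (A.charpoly.roots.map fun z => negMulLog z.re).sum := by
  rw [vNEntropy_eq_sum_negMulLog hA, hA.roots_charpoly_eq_eigenvalues, Multiset.map_map]
  rfl

theorem vNEntropy_submatrix_equiv (A : Matrix n n ℂ) (e : m ≃ n) :
    vNEntropy (A.submatrix e e) = vNEntropy A := by
  by_cases hA : A.IsHermitian
  · rw [vNEntropy_eq_sum_roots_charpoly (hA.submatrix e), vNEntropy_eq_sum_roots_charpoly hA,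
      show A.submatrix e e = reindex e.symm e.symm A from rfl, charpoly_reindex]
  · have hAe : ¬(A.submatrix e e).IsHermitian := fun h => hA (by simpa using h.submatrix e.symm)
    simp [vNEntropy, hA, hAe]

theorem vNEntropy_diagonal (d : n → ℝ) :
    vNEntropy (diagonal ((↑) ∘ d) : Matrix n n ℂ) = ∑ i, negMulLog (d i) := by
  rw [vNEntropy_eq_sum_roots_charpoly (isHermitian_diagonal_of_self_adjoint _ (by ext; simp)),
    charpoly_diagonal, roots_prod _ _ (by simp [Finset.prod_ne_zero_iff, X_sub_C_ne_zero])]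
  simp [Finset.sum_map_val]

/-- `X ^ |m| χ(B Bᴴ) = X ^ |n| χ(Bᴴ B)`, and zero eigenvalues carry no entropy. -/
theorem vNEntropy_mul_conjTranspose_comm (B : Matrix n m ℂ) :
    vNEntropy (B * Bᴴ) = vNEntropy (Bᴴ * B) := by
  have hroots := congrArg roots (charpoly_mul_comm' B Bᴴ)
  rw [roots_mul (by simp [(B * Bᴴ).charpoly_monic.ne_zero]),
    roots_mul (by simp [(Bᴴ * B).charpoly_monic.ne_zero]), roots_X_pow, roots_X_pow] at hroots
  have hsum := congrArg (fun s : Multiset ℂ => (s.map fun z => negMulLog z.re).sum) hroots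
  simp only [Multiset.map_add, Multiset.sum_add, Multiset.map_nsmul, Multiset.sum_nsmul,
    Multiset.map_singleton, Multiset.sum_singleton, Complex.zero_re, negMulLog_zero, smul_zero,
    zero_add] at hsum
  rw [vNEntropy_eq_sum_roots_charpoly (isHermitian_mul_conjTranspose_self B),
    vNEntropy_eq_sum_roots_charpoly (isHermitian_conjTranspose_mul_self B), hsum]

theorem vNEntropy_mul_conjTranspose_of_diagonal {C : Matrix n m ℂ} {d : m → ℝ}
    (hC : Cᴴ * C = diagonal ((↑) ∘ d)) : vNEntropy (C * Cᴴ) = ∑ k, negMulLog (d k) := by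
  rw [vNEntropy_mul_conjTranspose_comm, hC, vNEntropy_diagonal]

theorem vNEntropy_le_sum_negMulLog_diag {A : Matrix n n ℂ} (hA : A.PosSemidef) :
    vNEntropy A ≤ ∑ i, negMulLog (A i i).re := by
  set U := hA.isHermitian.eigenvectorUnitary
  set μ := hA.isHermitian.eigenvalues
  calc vNEntropy A = ∑ j, ∑ i, Complex.normSq (U i j) * negMulLog (μ j) := by
        simp only [vNEntropy_eq_sum_negMulLog hA.isHermitian, ← Finset.sum_mul,
          sum_normSq_col_eq_one U.2, one_mul, μ]
    _ = ∑ i, ∑ j, Complex.normSq (U i j) * negMulLog (μ j) := Finset.sum_comm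
    _ ≤ ∑ i, negMulLog (∑ j, Complex.normSq (U i j) * μ j) := by
        gcongr with i
        exact concaveOn_negMulLog.le_map_sum (fun j _ => Complex.normSq_nonneg _)
          (sum_normSq_row_eq_one U.2 i) fun j _ => hA.eigenvalues_nonneg j
    _ = ∑ i, negMulLog (A i i).re := by
        simp only [hA.isHermitian.re_apply_self_eq_sum_eigenvalues, U, μ]

theorem IsDensity.exists_eq_mul_conjTranspose_diagonal {ρ : Matrix n n ℂ} (hρ : IsDensity ρ) :
    ∃ (C : Matrix n n ℂ) (d : n → ℝ), ρ = C * Cᴴ ∧ Cᴴ * C = diagonal ((↑) ∘ d) ∧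
      (∀ k, 0 ≤ d k) ∧ ∑ k, d k = 1 := by
  obtain ⟨C, d, hρC, hCd, hd, htr⟩ := hρ.1.exists_eq_mul_conjTranspose_diagonal
  exact ⟨C, d, hρC, hCd, hd, by exact_mod_cast htr.symm.trans hρ.2⟩

theorem vNEntropy_kronecker {ρ : Matrix n n ℂ} {σ : Matrix m m ℂ} (hρ : IsDensity ρ)
    (hσ : IsDensity σ) : vNEntropy (ρ ⊗ₖ σ) = vNEntropy ρ + vNEntropy σ := by
  obtain ⟨C, d, rfl, hCd, -, hd⟩ := hρ.exists_eq_mul_conjTranspose_diagonal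
  obtain ⟨D, e, rfl, hDe, -, he⟩ := hσ.exists_eq_mul_conjTranspose_diagonal
  have hCD : (C ⊗ₖ D)ᴴ * (C ⊗ₖ D) = diagonal ((↑) ∘ fun k : n × m => d k.1 * e k.2) := by
    rw [conjTranspose_kronecker, ← mul_kronecker_mul, hCd, hDe, diagonal_kronecker_diagonal]
    simp [Function.comp_def]
  rw [mul_kronecker_mul, ← conjTranspose_kronecker, vNEntropy_mul_conjTranspose_of_diagonal hCD,
    vNEntropy_mul_conjTranspose_of_diagonal hCd, vNEntropy_mul_conjTranspose_of_diagonal hDe,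
    Fintype.sum_prod_type]
  simp only [sum_negMulLog_mul_of_sum_eq_one _ he, Finset.sum_add_distrib, ← Finset.sum_mul, hd,
    one_mul]

theorem vNEntropy_sum_smul_le {ι : Type*} [Fintype ι] (p : ι → ℝ) (hp : ∀ x, 0 ≤ p x)
    {ρ : ι → Matrix n n ℂ} (hρ : ∀ x, IsDensity (ρ x)) :
    vNEntropy (∑ x, (p x : ℂ) • ρ x) ≤ ∑ x, p x * vNEntropy (ρ x) + shannon p := by
  classical
  choose C d hρC hCd _ hd using fun x => (hρ x).exists_eq_mul_conjTranspose_diagonal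
  set M := weightedStack p C
  have hdiag (y : ι × n) : ((Mᴴ * M) y y).re = p y.1 * d y.1 y.2 := by
    simp [M, conjTranspose_mul_weightedStack_apply_self hp, hCd]
  calc vNEntropy (∑ x, (p x : ℂ) • ρ x) = vNEntropy (Mᴴ * M) := by
        simp only [hρC, ← weightedStack_mul_conjTranspose hp, vNEntropy_mul_conjTranspose_comm, M]
    _ ≤ ∑ y, negMulLog ((Mᴴ * M) y y).re :=
        vNEntropy_le_sum_negMulLog_diag (posSemidef_conjTranspose_mul_self M)
    _ = ∑ x, p x * vNEntropy (ρ x) + shannon p := by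
        simp only [hdiag, Fintype.sum_prod_type, sum_negMulLog_mul_of_sum_eq_one _ (hd _),
          shannon_eq_sum_negMulLog, hρC, vNEntropy_mul_conjTranspose_of_diagonal (hCd _),
          Finset.sum_add_distrib]
        ring

end Entropy

section Kraus

variable {n K : Type*} [Fintype n] [DecidableEq n]

@[simp]
theorem multiKraus_zero (U : Matrix n n ℂ) (X : K → Matrix n n ℂ) (idx : Fin 0 → K) :
    multiKraus U X 0 idx = 1 := by
  simp [multiKraus]

theorem multiKraus_succ (U : Matrix n n ℂ) (X : K → Matrix n n ℂ) (t : ℕ)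
    (idx : Fin (t + 1) → K) :
    multiKraus U X (t + 1) idx = U * X (idx 0) * multiKraus U X t (Fin.tail idx) := by
  simp [multiKraus, List.ofFn_succ, Fin.tail]

theorem multiKraus_blockDiagonal' {o : Type*} [Fintype o] [DecidableEq o] {d : o → Type*}
    [∀ l, Fintype (d l)] [∀ l, DecidableEq (d l)] (U : ∀ l, Matrix (d l) (d l) ℂ)
    (X : ∀ l, K → Matrix (d l) (d l) ℂ) (t : ℕ) (idx : Fin t → K) :
    multiKraus (blockDiagonal' U) (fun k => blockDiagonal' fun l => X l k) t idx =
      blockDiagonal' fun l => multiKraus (U l) (X l) t idx := by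
  induction t with
  | zero =>
    simp only [multiKraus_zero]
    exact blockDiagonal'_one.symm
  | succ t ih => simp only [multiKraus_succ, ih, ← blockDiagonal'_mul]

theorem multiKraus_kronecker {m K' : Type*} [Fintype m] [DecidableEq m] (U : Matrix m m ℂ)
    (X : K → Matrix n n ℂ) (Y : K' → Matrix m m ℂ) (t : ℕ) (idx : Fin t → K × K') :
    multiKraus ((1 : Matrix n n ℂ) ⊗ₖ U) (fun k => X k.1 ⊗ₖ Y k.2) t idx =
      multiKraus 1 X t (fun s => (idx s).1) ⊗ₖ multiKraus U Y t (fun s => (idx s).2) := by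
  induction t with
  | zero => simp
  | succ t ih =>
    rw [multiKraus_succ, ih, multiKraus_succ, multiKraus_succ, ← mul_kronecker_mul,
      ← mul_kronecker_mul]
    rfl

theorem multiKraus_blockDiagonal'_kronecker {o : Type*} [Fintype o] [DecidableEq o]
    {d d' : o → Type*} [∀ l, Fintype (d l)] [∀ l, DecidableEq (d l)] [∀ l, Fintype (d' l)]
    [∀ l, DecidableEq (d' l)] {K' : Type*} (U : ∀ l, Matrix (d' l) (d' l) ℂ)
    (X : ∀ l, K → Matrix (d l) (d l) ℂ) (Y : ∀ l, K' → Matrix (d' l) (d' l) ℂ) (t : ℕ) :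
    multiKraus (blockDiagonal' fun l => (1 : Matrix (d l) (d l) ℂ) ⊗ₖ U l)
        (fun k : K × K' => blockDiagonal' fun l => X l k.1 ⊗ₖ Y l k.2) t =
      (fun a : (Fin t → K) × (Fin t → K') => blockDiagonal' fun l =>
          multiKraus 1 (X l) t a.1 ⊗ₖ multiKraus (U l) (Y l) t a.2) ∘
        Equiv.arrowProdEquivProdArrow (Fin t) (fun _ => K) (fun _ => K') := by
  ext1 idx
  rw [multiKraus_blockDiagonal']
  simp only [multiKraus_kronecker]
  rfl

theorem IsPartition.multiKraus [Fintype K] {U : Matrix n n ℂ} (hU : U ∈ unitaryGroup n ℂ)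
    {X : K → Matrix n n ℂ} (hX : IsPartition X) (t : ℕ) : IsPartition (multiKraus U X t) := by
  induction t with
  | zero => simp [IsPartition]
  | succ t ih =>
    have hUU : Uᴴ * U = 1 := mem_unitaryGroup_iff'.mp hU
    have hcons (i : K) (idx : Fin t → K) :
        (AFL.multiKraus U X (t + 1) (Fin.cons i idx))ᴴ *
            AFL.multiKraus U X (t + 1) (Fin.cons i idx) =
          (AFL.multiKraus U X t idx)ᴴ * ((X i)ᴴ * X i) * AFL.multiKraus U X t idx := by
      simp only [multiKraus_succ, Fin.cons_zero, Fin.tail_cons, conjTranspose_mul,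
        Matrix.mul_assoc]
      rw [← Matrix.mul_assoc Uᴴ, hUU, Matrix.one_mul]
    unfold IsPartition at *
    rw [← (Fin.consEquiv fun _ => K).sum_comp, Fintype.sum_prod_type, Finset.sum_comm]
    simp only [Fin.consEquiv, Equiv.coe_fn_mk, hcons, ← Finset.sum_mul, ← Finset.mul_sum, hX,
      Matrix.mul_one, ih]

end Kraus

section Environment

variable {n K : Type*} [Fintype n] [Fintype K]

theorem envState_comp {K' : Type*} [Fintype K'] (X : K → Matrix n n ℂ) (e : K' → K)
    (ρ : Matrix n n ℂ) : envState (X ∘ e) ρ = (envState X ρ).submatrix e e :=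
  rfl

theorem envState_sum_smul {V : Type*} [Fintype V] (X : K → Matrix n n ℂ) (c : V → ℂ)
    (ρ : V → Matrix n n ℂ) : envState X (∑ v, c v • ρ v) = ∑ v, c v • envState X (ρ v) := by
  ext i j
  simp [AFL.envState, Matrix.sum_apply, Matrix.mul_sum, Matrix.sum_mul, trace_sum, trace_smul]

theorem envState_kronecker {m K' : Type*} [Fintype m] [Fintype K'] (X : K → Matrix n n ℂ)
    (Y : K' → Matrix m m ℂ) (ρ : Matrix n n ℂ) (σ : Matrix m m ℂ) :
    envState (fun k : K × K' => X k.1 ⊗ₖ Y k.2) (ρ ⊗ₖ σ) = envState X ρ ⊗ₖ envState Y σ := by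
  ext ⟨i, i'⟩ ⟨j, j'⟩
  simp [AFL.envState, conjTranspose_kronecker, ← mul_kronecker_mul, trace_kronecker]

theorem envState_blockDiagonal' {o : Type*} [Fintype o] [DecidableEq o] {d : o → Type*}
    [∀ l, Fintype (d l)] [∀ l, DecidableEq (d l)] (X : ∀ l, K → Matrix (d l) (d l) ℂ)
    (ρ : ∀ l, Matrix (d l) (d l) ℂ) :
    envState (fun k => blockDiagonal' fun l => X l k) (blockDiagonal' ρ) =
      ∑ l, envState (X l) (ρ l) := by
  ext i j
  simp [AFL.envState, Matrix.sum_apply, blockDiagonal'_conjTranspose, ← blockDiagonal'_mul,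
    trace_blockDiagonal']

variable [DecidableEq n]

theorem trace_envState {X : K → Matrix n n ℂ} (hX : IsPartition X) (ρ : Matrix n n ℂ) :
    (envState X ρ).trace = ρ.trace := by
  change ∑ i, (X i * ρ * (X i)ᴴ).trace = ρ.trace
  simp only [trace_mul_cycle (X _), ← trace_sum, ← Finset.sum_mul]
  rw [hX, Matrix.one_mul]

theorem posSemidef_envState {ρ : Matrix n n ℂ} (hρ : ρ.PosSemidef) (X : K → Matrix n n ℂ) :
    (envState X ρ).PosSemidef := by
  obtain ⟨C, -, rfl, -⟩ := hρ.exists_eq_mul_conjTranspose_diagonal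
  set B : Matrix K (n × n) ℂ := of fun i r => (X i * C) r.1 r.2
  have hB : AFL.envState X (C * Cᴴ) = B * Bᴴ := by
    ext i j
    have h : X i * (C * Cᴴ) * (X j)ᴴ = X i * C * (X j * C)ᴴ := by
      simp only [conjTranspose_mul, Matrix.mul_assoc]
    rw [AFL.envState, of_apply, h]
    simp only [trace, diag_apply, mul_apply (M := B), mul_apply (M := X i * C),
      Fintype.sum_prod_type, B, of_apply, conjTranspose_apply]
  rw [hB]
  exact posSemidef_self_mul_conjTranspose B

theorem IsDensity.envState {ρ : Matrix n n ℂ} (hρ : IsDensity ρ) {X : K → Matrix n n ℂ}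
    (hX : IsPartition X) : IsDensity (envState X ρ) :=
  ⟨posSemidef_envState hρ.1 X, (trace_envState hX ρ).trans hρ.2⟩

end Environment

end AFL

theorem stmt19_general {L : Type*} [Fintype L] [DecidableEq L]
    {m m' : L → Type*} [∀ l, Fintype (m l)] [∀ l, DecidableEq (m l)]
    [∀ l, Fintype (m' l)] [∀ l, DecidableEq (m' l)]
    {V : Type*} [Fintype V]
    {K1 K2 : Type*} [Fintype K1] [DecidableEq K1] [Fintype K2] [DecidableEq K2]
    (p : L → V → ℝ) (hp : ∀ l v, 0 ≤ p l v)
    (ρ1 : (l : L) → V → Matrix (m l) (m l) ℂ) (ρ2 : (l : L) → V → Matrix (m' l) (m' l) ℂ)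
    (hρ1 : ∀ l v, AFL.IsDensity (ρ1 l v)) (hρ2 : ∀ l v, AFL.IsDensity (ρ2 l v))
    (Ul : (l : L) → Matrix (m' l) (m' l) ℂ) (hUl : ∀ l, Ul l ∈ Matrix.unitaryGroup (m' l) ℂ)
    (Xl : (l : L) → K1 → Matrix (m l) (m l) ℂ) (hXl : ∀ l, AFL.IsPartition (Xl l))
    (X'l : (l : L) → K2 → Matrix (m' l) (m' l) ℂ) (hX'l : ∀ l, AFL.IsPartition (X'l l))
    (t : ℕ) :
    AFL.HAFL
        (Matrix.blockDiagonal' fun l => ∑ v, (p l v : ℂ) • (ρ1 l v ⊗ₖ ρ2 l v))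
        (Matrix.blockDiagonal' fun l => (1 : Matrix (m l) (m l) ℂ) ⊗ₖ Ul l)
        (fun ij : K1 × K2 => Matrix.blockDiagonal' fun l => Xl l ij.1 ⊗ₖ X'l l ij.2) t ≤
      (∑ l, ∑ v, p l v *
        (AFL.HAFL (ρ1 l v) (1 : Matrix (m l) (m l) ℂ) (Xl l) t +
         AFL.HAFL (ρ2 l v) (Ul l) (X'l l) t))
      + AFL.shannon (fun lv : L × V => p lv.1 lv.2) := by
  open AFL in
  have hσ1 (l : L) (v : V) : IsDensity (envState (multiKraus 1 (Xl l) t) (ρ1 l v)) :=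
    (hρ1 l v).envState ((hXl l).multiKraus (one_mem _) t)
  have hσ2 (l : L) (v : V) : IsDensity (envState (multiKraus (Ul l) (X'l l) t) (ρ2 l v)) :=
    (hρ2 l v).envState ((hX'l l).multiKraus (hUl l) t)
  have hmix := vNEntropy_sum_smul_le (fun x : L × V => p x.1 x.2) (fun x => hp _ _)
    fun x => (hσ1 x.1 x.2).kronecker (hσ2 x.1 x.2)
  rw [Fintype.sum_prod_type] at hmix
  rw [HAFL, multiKraus_blockDiagonal'_kronecker, envState_comp, envState_blockDiagonal',
    vNEntropy_submatrix_equiv]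
  simp only [envState_sum_smul, envState_kronecker]
  refine hmix.trans_eq ?_
  simp only [vNEntropy_kronecker (hσ1 _ _) (hσ2 _ _), Fintype.sum_prod_type, HAFL]

/-- Theorem 3, non-Abelian symmetry bound: for H = ⊕_l K_l ⊗ K'_l,
dynamics U = ⊕_l 1 ⊗ U_l, state ρ = ⊕_l ∑_ν p_l^ν ρ_l^ν ⊗ ρ'_l^ν and partition
X = ⊕_l X_l ⊗ X'_l,
H_AFL(ρ,U,X,t) ≤ ∑_{l,ν} p_l^ν [H_AFL(ρ_l^ν,1,X_l,t) + H_AFL(ρ'_l^ν,U_l,X'_l,t)]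
  + H({p_l^ν}). -/
theorem stmt19 {L : Type*} [Fintype L] [DecidableEq L]
    {m m' : L → Type*} [∀ l, Fintype (m l)] [∀ l, DecidableEq (m l)]
    [∀ l, Fintype (m' l)] [∀ l, DecidableEq (m' l)]
    {V : Type*} [Fintype V]
    {K1 K2 : Type*} [Fintype K1] [DecidableEq K1] [Fintype K2] [DecidableEq K2]
    (p : L → V → ℝ) (hp : ∀ l v, 0 ≤ p l v) (hp1 : ∑ l, ∑ v, p l v = 1)
    (ρ1 : (l : L) → V → Matrix (m l) (m l) ℂ) (ρ2 : (l : L) → V → Matrix (m' l) (m' l) ℂ)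
    (hρ1 : ∀ l v, AFL.IsDensity (ρ1 l v)) (hρ2 : ∀ l v, AFL.IsDensity (ρ2 l v))
    (Ul : (l : L) → Matrix (m' l) (m' l) ℂ) (hUl : ∀ l, Ul l ∈ Matrix.unitaryGroup (m' l) ℂ)
    (Xl : (l : L) → K1 → Matrix (m l) (m l) ℂ) (hXl : ∀ l, AFL.IsPartition (Xl l))
    (X'l : (l : L) → K2 → Matrix (m' l) (m' l) ℂ) (hX'l : ∀ l, AFL.IsPartition (X'l l))
    (t : ℕ) :
    AFL.HAFL
        (Matrix.blockDiagonal' fun l => ∑ v, (p l v : ℂ) • (ρ1 l v ⊗ₖ ρ2 l v))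
        (Matrix.blockDiagonal' fun l => (1 : Matrix (m l) (m l) ℂ) ⊗ₖ Ul l)
        (fun ij : K1 × K2 => Matrix.blockDiagonal' fun l => Xl l ij.1 ⊗ₖ X'l l ij.2) t ≤
      (∑ l, ∑ v, p l v *
        (AFL.HAFL (ρ1 l v) (1 : Matrix (m l) (m l) ℂ) (Xl l) t +
         AFL.HAFL (ρ2 l v) (Ul l) (X'l l) t))
      + AFL.shannon (fun lv : L × V => p lv.1 lv.2) :=
  stmt19_general p hp ρ1 ρ2 hρ1 hρ2 Ul hUl Xl hXl X'l hX'l t
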